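/- Define g(x) := (2x/(6x−9))·((2x−1)/(x+1))² for real x > 3/2. Then g attains its absolute minimum on (3/2, ∞) at x = (7+√41)/4, with minimum value 1 + (37−√41)/(399+69√41); in particular g(x) ≥ 1 + (37−√41)/(399+69√41) > 1 for all real x > 3/2. -/
import Mathlib


open Real

/-- The rational function `g(x) = (2x/(6x−9))·((2x−1)/(x+1))²`. -/
noncomputable def g (x : ℝ) : ℝ := (2 * x / (6 * x - 9)) * ((2 * x - 1) / (x + 1)) ^ 2

theorem g_min :
    (7 + Real.sqrt 41) / 4 > 3 / 2 ∧
    g ((7 + Real.sqrt 41) / 4) = 1 + (37 - Real.sqrt 41) / (399 + 69 * Real.sqrt 41) ∧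
    (∀ x : ℝ, x > 3 / 2 → g ((7 + Real.sqrt 41) / 4) ≤ g x) ∧
    (∀ x : ℝ, x > 3 / 2 →
      1 + (37 - Real.sqrt 41) / (399 + 69 * Real.sqrt 41) ≤ g x ∧ 1 < g x) := by
  set s := Real.sqrt 41 with hsdef
  have hs2 : s ^ 2 = 41 := Real.sq_sqrt (by norm_num)
  have hsnn : 0 ≤ s := Real.sqrt_nonneg 41
  have h6 : (6:ℝ) < s := by nlinarith
  have h7 : s < 7 := by nlinarith
  have hx0 : (7 + s) / 4 > 3 / 2 := by linarith
  -- the value at the minimizer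
  have hval : g ((7 + s) / 4) = (767 + 123 * s) / 1500 := by
    have h1 : (0:ℝ) < 6 * ((7 + s) / 4) - 9 := by nlinarith
    have h2 : (0:ℝ) < (7 + s) / 4 + 1 := by nlinarith
    have hg : g ((7 + s) / 4) = (2 * ((7 + s) / 4) * (2 * ((7 + s) / 4) - 1) ^ 2) /
        ((6 * ((7 + s) / 4) - 9) * ((7 + s) / 4 + 1) ^ 2) := by
      unfold g
      field_simp
    rw [hg, div_eq_div_iff (by positivity) (by norm_num)]
    linear_combination (-369/32*s^2 - 1197/8*s - 18819/32) * hs2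
  have hrhs : 1 + (37 - s) / (399 + 69 * s) = (767 + 123 * s) / 1500 := by
    have hd : (399 : ℝ) + 69 * s ≠ 0 := by positivity
    field_simp
    nlinarith [hs2]
  -- key inequality
  have key : ∀ x : ℝ, x > 3 / 2 → (767 + 123 * s) / 1500 ≤ g x := by
    intro x hx
    have hd1 : (0:ℝ) < 6 * x - 9 := by linarith
    have hd2 : (0:ℝ) < x + 1 := by linarith
    have hg : g x = (2 * x * (2 * x - 1) ^ 2) / ((6 * x - 9) * (x + 1) ^ 2) := by
      unfold g
      field_simp
    rw [hg, div_le_div_iff₀ (by norm_num) (by positivity)]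
    have heq : 3000 * x * (2 * x - 1) ^ 2 - (767 + 123 * s) * ((6 * x - 9) * (x + 1) ^ 2)
        = (x - (7 + s) / 4) ^ 2 * ((7398 - 738 * s) * x + 747 * s - 3537) := by
      linear_combination (369/8 * x * s - 747/16 * s - 369 * x ^ 2 + 4455/8 * x - 6921/16) * hs2
    have hlin : 0 ≤ (7398 - 738 * s) * x + 747 * s - 3537 := by nlinarith
    nlinarith [mul_nonneg (sq_nonneg (x - (7 + s) / 4)) hlin]
  refine ⟨hx0, by rw [hval, hrhs], ?_, ?_⟩
  · intro x hx
    rw [hval]; exact key x hx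
  · intro x hx
    have h1 := key x hx
    constructor
    · rw [hrhs]; exact h1
    · have : (1:ℝ) < (767 + 123 * s) / 1500 := by
        rw [lt_div_iff₀ (by norm_num)]; nlinarith
      linarith
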